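/- arXiv:2208.04281 — 3 statements merged into one kernel-verified Lean document; each statement's English description precedes it below -/
import Mathlib

section
/- A triple (x,y,z) of n×n complex matrices, acting as a Lie algebra element on ℂ^n⊗ℂ^n⊗ℂ^n via (x,y,z).(a⊗b⊗c) = x(a)⊗b⊗c + a⊗y(b)⊗c + a⊗b⊗z(c), annihilates the unit tensor M_⟨1⟩^⊕n if and only if x, y, z are all diagonal matrices and x + y + z = 0. -/
/-! Coordinate `(i, j, k)` of `(x, y, z).M⟨1⟩^⊕n` is `x i j [j = k] + y j i [i = k] + z k j [i = j]`.
For `i ≠ j` the coordinates `(i, j, j)`, `(j, i, j)` and `(j, j, i)` isolate the entries `x i j`,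
`y i j` and `z i j`, and `(i, i, i)` is the diagonal entry of `x + y + z`. Conversely, a triple of
diagonal matrices `(diag a, diag b, diag c)` scales coordinate `(i, j, k)` of any tensor by
`a i + b j + c k`, which vanishes on the support `i = j = k` of the unit tensor when
`a + b + c = 0`. -/

open scoped BigOperators

/-- The unit tensor `M⟨1⟩^⊕n = Σ eᵢ⊗eᵢ⊗eᵢ` in coordinates. -/
noncomputable def unitTensor (n : ℕ) : Fin n → Fin n → Fin n → ℂ :=
  fun i j k => if i = j ∧ j = k then 1 else 0

/-- The derivation (Lie algebra) action of a triple of matrices on a tensor: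
`(x,y,z).(a⊗b⊗c) = xa⊗b⊗c + a⊗yb⊗c + a⊗b⊗zc`. -/
noncomputable def lieAct {n : ℕ} (x y z : Matrix (Fin n) (Fin n) ℂ)
    (T : Fin n → Fin n → Fin n → ℂ) : Fin n → Fin n → Fin n → ℂ :=
  fun i j k => (∑ l, x i l * T l j k) + (∑ l, y j l * T i l k) + (∑ l, z k l * T i j l)

open Matrix

section

variable {n : ℕ}

lemma lieAct_diagonal_apply (a b c : Fin n → ℂ) (T : Fin n → Fin n → Fin n → ℂ) (i j k : Fin n) :
    lieAct (diagonal a) (diagonal b) (diagonal c) T i j k = (a i + b j + c k) * T i j k := by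
  simp [lieAct, diagonal_apply, ite_mul, add_mul]

variable (x y z : Matrix (Fin n) (Fin n) ℂ)

lemma lieAct_unitTensor_apply (i j k : Fin n) :
    lieAct x y z (unitTensor n) i j k =
      (if j = k then x i j else 0) + (if i = k then y j i else 0) +
        (if i = j then z k j else 0) := by
  simp [lieAct, unitTensor, ite_and, eq_comm]

lemma lieAct_unitTensor_apply_self (i : Fin n) :
    lieAct x y z (unitTensor n) i i i = (x + y + z) i i := by
  simp [lieAct_unitTensor_apply]

variable {x y z} {i j : Fin n}

lemma lieAct_unitTensor_apply_of_ne_left (h : i ≠ j) :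
    lieAct x y z (unitTensor n) i j j = x i j := by
  simp [lieAct_unitTensor_apply, h]

lemma lieAct_unitTensor_apply_of_ne_middle (h : i ≠ j) :
    lieAct x y z (unitTensor n) j i j = y i j := by
  simp [lieAct_unitTensor_apply, h, h.symm]

lemma lieAct_unitTensor_apply_of_ne_right (h : i ≠ j) :
    lieAct x y z (unitTensor n) j j i = z i j := by
  simp [lieAct_unitTensor_apply, h.symm]

end

/-- `(x,y,z)` annihilates the unit tensor iff `x, y, z` are diagonal and `x + y + z = 0`. -/
theorem lieAct_unitTensor_eq_zero_iff {n : ℕ} (x y z : Matrix (Fin n) (Fin n) ℂ) :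
    lieAct x y z (unitTensor n) = 0 ↔
      x.IsDiag ∧ y.IsDiag ∧ z.IsDiag ∧ x + y + z = 0 := by
  constructor
  · intro h
    have hcoord (i j k : Fin n) : lieAct x y z (unitTensor n) i j k = 0 := congrFun₃ h i j k
    have hx : x.IsDiag := fun i j hij =>
      (lieAct_unitTensor_apply_of_ne_left hij).symm.trans (hcoord i j j)
    have hy : y.IsDiag := fun i j hij =>
      (lieAct_unitTensor_apply_of_ne_middle hij).symm.trans (hcoord j i j)
    have hz : z.IsDiag := fun i j hij =>
      (lieAct_unitTensor_apply_of_ne_right hij).symm.trans (hcoord j j i)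
    refine ⟨hx, hy, hz, ?_⟩
    ext i j
    rcases eq_or_ne i j with rfl | hij
    · exact (lieAct_unitTensor_apply_self x y z i).symm.trans (hcoord i i i)
    · exact (hx.add hy).add hz hij
  · rintro ⟨hx, hy, hz, hsum⟩
    ext i j k
    rw [← hx.diagonal_diag, ← hy.diagonal_diag, ← hz.diagonal_diag, lieAct_diagonal_apply]
    rcases em (i = j ∧ j = k) with ⟨rfl, rfl⟩ | hijk
    · simpa [unitTensor] using congrFun₂ hsum i i
    · simp [unitTensor, hijk]
end

section
/- If (f,g,h) ∈ GL(A)×GL(B)×GL(C) fixes the unit tensor M_⟨1⟩^⊕n, then there exist a permutation σ ∈ S_n and nonzero scalars λ_1,…,λ_n, μ_1,…,μ_n, ν_1,…,ν_n with λ_iμ_iν_i = 1 for all i, such that f(a_i) = λ_i a_{σ(i)}, g(b_i) = μ_i b_{σ(i)}, and h(c_i) = ν_i c_{σ(i)} for all i. -/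
open scoped BigOperators

/-- The factorwise action of a triple of matrices on a tensor. -/
noncomputable def actT {n : ℕ} (f g h : Matrix (Fin n) (Fin n) ℂ)
    (T : Fin n → Fin n → Fin n → ℂ) : Fin n → Fin n → Fin n → ℂ :=
  fun i j k => ∑ i', ∑ j', ∑ k', f i i' * g j j' * h k k' * T i' j' k'

/-!
Fixing the unit tensor means `∑ₘ f i m * g j m * h k m = δ_{ijk}`. For fixed `k` this reads
`f * diagonal (h k) * gᵀ = E_kk`, so with `f, g` invertible the diagonal matrix `diagonal (h k)`
has rank one and the row `h k` has at most one nonzero entry; being invertible, `h` is then a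
permutation matrix with nonzero weights. The condition is invariant under cycling `(f, g, h)`, so
the same holds for `f` and `g`, and evaluating the condition at the three nonzero entries of
column `m` forces the three permutations to agree at `m` and the weights to multiply to `1`.
-/

namespace Matrix

variable {ι K : Type*} [DecidableEq ι]

theorem mul_eq_zero_of_diagonal_eq_vecMulVec [CommMonoidWithZero K] {d x y : ι → K}
    (hd : diagonal d = vecMulVec x y) {m m' : ι} (hm : m ≠ m') : d m * d m' = 0 := by
  have entry : ∀ a b, diagonal d a b = x a * y b := fun a b => by rw [hd, vecMulVec_apply]
  calc d m * d m' = x m * y m' * (x m' * y m) := by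
        rw [← diagonal_apply_eq d m, ← diagonal_apply_eq d m', entry, entry]; ac_rfl
    _ = 0 := by rw [← entry, diagonal_apply_ne d hm, zero_mul]

theorem exists_diagonal_eq_vecMulVec [Fintype ι] [Field K] {f g : Matrix ι ι K} (hf : IsUnit f)
    (hg : IsUnit g) {d u v : ι → K} (h : f * diagonal d * g = vecMulVec u v) :
    ∃ x y : ι → K, diagonal d = vecMulVec x y := by
  refine ⟨f⁻¹ *ᵥ u, v ᵥ* g⁻¹, ?_⟩
  rw [← vecMulVec_mul, ← mul_vecMulVec, ← h, Matrix.mul_assoc,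
    mul_nonsing_inv_cancel_right _ _ ((isUnit_iff_isUnit_det g).mp hg),
    nonsing_inv_mul_cancel_left _ _ ((isUnit_iff_isUnit_det f).mp hf)]

theorem exists_perm_eq_ite_of_isUnit [Fintype ι] [Field K] {M : Matrix ι ι K} (hM : IsUnit M)
    (hrow : ∀ k m m', m ≠ m' → M k m * M k m' = 0) :
    ∃ (σ : Equiv.Perm ι) (ν : ι → K), (∀ i, ν i ≠ 0) ∧
      ∀ i j, M j i = if j = σ i then ν i else 0 := by
  have hdet : M.det ≠ 0 := ((isUnit_iff_isUnit_det M).mp hM).ne_zero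
  have row_ne : ∀ k, ∃ m, M k m ≠ 0 := fun k => by
    by_contra! h0; exact hdet (det_eq_zero_of_row_eq_zero k h0)
  choose τ hτ using row_ne
  have eq_zero : ∀ k m, m ≠ τ k → M k m = 0 := fun k m hm =>
    (mul_eq_zero.mp (hrow k m (τ k) hm)).resolve_right (hτ k)
  have hsurj : Function.Surjective τ := fun m => by
    by_contra! hm
    exact hdet (det_eq_zero_of_column_eq_zero m fun k => eq_zero k m (hm k).symm)
  let e := Equiv.ofBijective τ ⟨Finite.injective_iff_surjective.mpr hsurj, hsurj⟩
  have hτe : ∀ i, τ (e.symm i) = i := e.apply_symm_apply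
  refine ⟨e.symm, fun i => M (e.symm i) i, fun i => ?_, fun i j => ?_⟩
  · simpa only [hτe] using hτ (e.symm i)
  · split_ifs with hj
    · rw [hj]
    · exact eq_zero j i fun hi => hj (hi ▸ (e.symm_apply_apply j).symm)

end Matrix

open Matrix

theorem actT_unitTensor_apply {n : ℕ} (f g h : Matrix (Fin n) (Fin n) ℂ) (i j k : Fin n) :
    actT f g h (unitTensor n) i j k = ∑ m, f i m * g j m * h k m := by
  simp only [actT, unitTensor, ite_and, mul_ite, mul_one, mul_zero, Finset.sum_ite_irrel,
    Finset.sum_ite_eq, Finset.mem_univ, ↓reduceIte, Finset.sum_const_zero]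

theorem unitTensor_rotate {n : ℕ} (i j k : Fin n) : unitTensor n j k i = unitTensor n i j k := by
  simp only [unitTensor]
  grind

variable {n : ℕ} {f g h : Matrix (Fin n) (Fin n) ℂ}

theorem actT_rotate_unitTensor (hfix : actT f g h (unitTensor n) = unitTensor n) :
    actT g h f (unitTensor n) = unitTensor n := by
  ext i j k
  rw [actT_unitTensor_apply, unitTensor_rotate, ← hfix, actT_unitTensor_apply]
  exact Finset.sum_congr rfl fun m _ => by ring

theorem mul_diagonal_mul_transpose_eq_single (hfix : actT f g h (unitTensor n) = unitTensor n)
    (k : Fin n) : f * diagonal (h k) * gᵀ = single k k 1 := by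
  ext i j
  calc (f * diagonal (h k) * gᵀ) i j = ∑ m, f i m * g j m * h k m := by
        rw [mul_apply]
        exact Finset.sum_congr rfl fun m _ => by rw [mul_diagonal, transpose_apply, mul_right_comm]
    _ = unitTensor n i j k := by rw [← actT_unitTensor_apply, hfix]
    _ = single k k 1 i j := by
        simp only [unitTensor, single, of_apply]
        grind

theorem exists_perm_of_actT_unitTensor (hf : IsUnit f) (hg : IsUnit g) (hh : IsUnit h)
    (hfix : actT f g h (unitTensor n) = unitTensor n) :
    ∃ (σ : Equiv.Perm (Fin n)) (ν : Fin n → ℂ), (∀ i, ν i ≠ 0) ∧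
      ∀ i j, h j i = if j = σ i then ν i else 0 := by
  refine exists_perm_eq_ite_of_isUnit hh fun k m m' hm => ?_
  have hk := mul_diagonal_mul_transpose_eq_single hfix k
  rw [single_eq_single_vecMulVec_single] at hk
  obtain ⟨x, y, hxy⟩ := exists_diagonal_eq_vecMulVec hf ((isUnit_transpose g).mpr hg) hk
  exact mul_eq_zero_of_diagonal_eq_vecMulVec hxy hm

theorem perm_eq_and_mul_eq_one_of_actT_unitTensor {σ₁ σ₂ σ₃ : Equiv.Perm (Fin n)}
    {lam mu nu : Fin n → ℂ} (hlam : ∀ i, lam i ≠ 0) (hmu : ∀ i, mu i ≠ 0) (hnu : ∀ i, nu i ≠ 0)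
    (hf : ∀ i j, f j i = if j = σ₁ i then lam i else 0)
    (hg : ∀ i j, g j i = if j = σ₂ i then mu i else 0)
    (hh : ∀ i j, h j i = if j = σ₃ i then nu i else 0)
    (hfix : actT f g h (unitTensor n) = unitTensor n) :
    σ₁ = σ₂ ∧ σ₁ = σ₃ ∧ ∀ m, lam m * mu m * nu m = 1 := by
  have key : ∀ m, σ₁ m = σ₂ m ∧ σ₂ m = σ₃ m ∧ lam m * mu m * nu m = 1 := fun m => by
    have hsum : actT f g h (unitTensor n) (σ₁ m) (σ₂ m) (σ₃ m) = lam m * mu m * nu m := by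
      rw [actT_unitTensor_apply, Finset.sum_eq_single m]
      · simp only [hf, hg, hh, if_true]
      · intro b _ hb
        rw [hf, if_neg fun e => hb (σ₁.injective e).symm, zero_mul, zero_mul]
      · exact fun hm => absurd (Finset.mem_univ m) hm
    rw [hfix, unitTensor] at hsum
    split_ifs at hsum with hσ
    · exact ⟨hσ.1, hσ.2, hsum.symm⟩
    · exact absurd hsum.symm (mul_ne_zero (mul_ne_zero (hlam m) (hmu m)) (hnu m))
  exact ⟨Equiv.ext fun m => (key m).1, Equiv.ext fun m => (key m).1.trans (key m).2.1,
    fun m => (key m).2.2⟩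

/-- If `(f,g,h) ∈ GL×GL×GL` fixes the unit tensor, then there are a permutation `σ` and
nonzero scalars `λᵢ, μᵢ, νᵢ` with `λᵢμᵢνᵢ = 1` such that `f(aᵢ) = λᵢ a_{σ(i)}`,
`g(bᵢ) = μᵢ b_{σ(i)}`, `h(cᵢ) = νᵢ c_{σ(i)}`. -/
theorem stabilizer_unitTensor_structure {n : ℕ} (f g h : Matrix (Fin n) (Fin n) ℂ)
    (hf : IsUnit f) (hg : IsUnit g) (hh : IsUnit h)
    (hfix : actT f g h (unitTensor n) = unitTensor n) :
    ∃ (σ : Equiv.Perm (Fin n)) (lam mu nu : Fin n → ℂ),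
      (∀ i, lam i ≠ 0) ∧ (∀ i, mu i ≠ 0) ∧ (∀ i, nu i ≠ 0) ∧
      (∀ i, lam i * mu i * nu i = 1) ∧
      (∀ i j, f j i = if j = σ i then lam i else 0) ∧
      (∀ i j, g j i = if j = σ i then mu i else 0) ∧
      (∀ i j, h j i = if j = σ i then nu i else 0) := by
  have hfix' := actT_rotate_unitTensor hfix
  obtain ⟨σ₁, lam, hlam, hf'⟩ := exists_perm_of_actT_unitTensor hg hh hf hfix'
  obtain ⟨σ₂, mu, hmu, hg'⟩ :=
    exists_perm_of_actT_unitTensor hh hf hg (actT_rotate_unitTensor hfix')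
  obtain ⟨σ₃, nu, hnu, hh'⟩ := exists_perm_of_actT_unitTensor hf hg hh hfix
  obtain ⟨rfl, rfl, hprod⟩ :=
    perm_eq_and_mul_eq_one_of_actT_unitTensor hlam hmu hnu hf' hg' hh' hfix
  exact ⟨σ₁, lam, mu, nu, hlam, hmu, hnu, hprod, hf', hg', hh'⟩
end

section
/- Let c(t) be the one-parameter group of triples of diagonal matrices with entries t^{λ_i}, t^{μ_j}, t^{ν_k} where λ_k = 2^n − 2^{n−k+1} and μ_k = ν_k = 2^{n−k} − 2^{n−1}. Then for every t ≠ 0, c(t) fixes the unit tensor M_⟨1⟩^⊕n, and for every w in the span W of the e_i⊗e_j⊗e_k with min(j,k) < i, the limit as t → 0 of c(t)·w is 0. Consequently W is contained in the nullcone of the stabilizer group of the unit tensor. -/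
/-!
On `eᵢ⊗eⱼ⊗e_k` the diagonal torus element `c(t)` acts by the scalar `t^(λᵢ + μⱼ + μ_k)`, and
`λᵢ + μⱼ + μ_k = 2^(n-j-1) + 2^(n-k-1) - 2^(n-i)` (0-based indices). This weight vanishes on the
diagonal `i = j = k`, so `c(t)` fixes the unit tensor, and it is positive as soon as `j < i` or
`k < i`, since then `2^(n-i)` is at most one of the two positive summands. Hence every coordinate
of `c(t)·w` tends to `0` for `w ∈ W`, and the invertible `c(t)` exhibit `0` in the closure of the
stabilizer orbit of `w`.
-/

open scoped BigOperators

/-- The basis tensor `eᵢ⊗eⱼ⊗e_k`. -/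
noncomputable def basisTensor {n : ℕ} (i j k : Fin n) : Fin n → Fin n → Fin n → ℂ :=
  fun a b c => if a = i ∧ b = j ∧ c = k then 1 else 0

/-- The exponent `λ_k = 2ⁿ − 2^{n−k+1}` (with `k = i.val + 1`, i.e. 1-based). -/
def lamExp (n : ℕ) (i : Fin n) : ℤ := 2 ^ n - 2 ^ (n - i.val)

/-- The exponent `μ_k = ν_k = 2^{n−k} − 2^{n−1}` (with `k = i.val + 1`, i.e. 1-based). -/
def muExp (n : ℕ) (i : Fin n) : ℤ := 2 ^ (n - i.val - 1) - 2 ^ (n - 1)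

open Filter Topology

section Weights

variable {n : ℕ}

theorem lamExp_add_muExp_add_muExp (i j k : Fin n) :
    lamExp n i + muExp n j + muExp n k = 2 ^ (n - j - 1) + 2 ^ (n - k - 1) - 2 ^ (n - i) := by
  obtain ⟨m, rfl⟩ : ∃ m, n = m + 1 := Nat.exists_eq_succ_of_ne_zero i.pos.ne'
  simp only [lamExp, muExp, Nat.add_sub_cancel, pow_succ]
  ring

theorem lamExp_add_muExp_add_muExp_self (i : Fin n) : lamExp n i + muExp n i + muExp n i = 0 := by
  rw [lamExp_add_muExp_add_muExp, ← two_mul, ← pow_succ',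
    Nat.sub_add_cancel (Nat.sub_pos_of_lt i.isLt), sub_self]

theorem lamExp_add_muExp_add_muExp_pos {i j k : Fin n} (h : min j k < i) :
    0 < lamExp n i + muExp n j + muExp n k := by
  rw [lamExp_add_muExp_add_muExp]
  have hle {a : Fin n} (ha : a < i) : (2 : ℤ) ^ (n - i) ≤ 2 ^ (n - a - 1) :=
    pow_le_pow_right₀ one_le_two (by omega)
  have hj : (0 : ℤ) < 2 ^ (n - j - 1) := by positivity
  have hk : (0 : ℤ) < 2 ^ (n - k - 1) := by positivity
  rcases min_lt_iff.1 h with hji | hki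
  · linarith [hle hji]
  · linarith [hle hki]

end Weights

theorem actT_diagonal {n : ℕ} (a b c : Fin n → ℂ) (T : Fin n → Fin n → Fin n → ℂ) :
    actT (Matrix.diagonal a) (Matrix.diagonal b) (Matrix.diagonal c) T =
      fun i j k => a i * b j * c k * T i j k := by
  funext i j k
  simp [actT, Matrix.diagonal_apply, ite_mul, mul_assoc]

theorem actT_diagonal_zpow {n : ℕ} {t : ℂ} (ht : t ≠ 0) (a b c : Fin n → ℤ)
    (T : Fin n → Fin n → Fin n → ℂ) :
    actT (Matrix.diagonal fun i => t ^ a i) (Matrix.diagonal fun j => t ^ b j)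
        (Matrix.diagonal fun k => t ^ c k) T =
      fun i j k => t ^ (a i + b j + c k) * T i j k := by
  simp only [actT_diagonal, zpow_add₀ ht]

theorem apply_eq_zero_of_mem_span_basisTensor {n : ℕ} {P : Fin n → Fin n → Fin n → Prop}
    {w : Fin n → Fin n → Fin n → ℂ}
    (hw : w ∈ Submodule.span ℂ {T | ∃ i j k, P i j k ∧ T = basisTensor i j k})
    {i j k : Fin n} (hP : ¬P i j k) : w i j k = 0 := by
  induction hw using Submodule.span_induction with
  | mem x hx =>
    obtain ⟨a, b, c, hPabc, rfl⟩ := hx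
    have hne : ¬(i = a ∧ j = b ∧ k = c) := by
      rintro ⟨rfl, rfl, rfl⟩
      exact hP hPabc
    simp [basisTensor, hne]
  | zero => rfl
  | add x y _ _ hx hy => simp [hx, hy]
  | smul c x _ hx => simp [hx]

theorem tendsto_zpow_mul_nhds_zero {𝕜 : Type*} [NormedField 𝕜] {e : ℤ} {a : 𝕜}
    (h : a ≠ 0 → 0 < e) : Tendsto (fun t : 𝕜 => t ^ e * a) (𝓝 0) (𝓝 0) := by
  by_cases ha : a = 0
  · simp [ha]
  have he := h ha
  simpa [zero_zpow e he.ne'] using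
    ((continuousAt_zpow₀ (0 : 𝕜) e (Or.inr he.le)).tendsto).mul_const a

theorem tendsto_zpow_mul_tensor_nhds_zero {𝕜 α β γ : Type*} [NormedField 𝕜]
    {e : α → β → γ → ℤ} {T : α → β → γ → 𝕜} (h : ∀ i j k, T i j k ≠ 0 → 0 < e i j k) :
    Tendsto (fun t : 𝕜 => fun i j k => t ^ e i j k * T i j k) (𝓝 0) (𝓝 0) := by
  simp only [tendsto_pi_nhds]
  exact fun i j k => tendsto_zpow_mul_nhds_zero (h i j k)

theorem actT_oneParam_unitTensor {n : ℕ} {t : ℂ} (ht : t ≠ 0) :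
    actT (Matrix.diagonal fun i => t ^ lamExp n i) (Matrix.diagonal fun j => t ^ muExp n j)
      (Matrix.diagonal fun k => t ^ muExp n k) (unitTensor n) = unitTensor n := by
  rw [actT_diagonal_zpow ht]
  funext i j k
  by_cases hijk : i = j ∧ j = k
  · obtain ⟨rfl, rfl⟩ := hijk
    rw [lamExp_add_muExp_add_muExp_self, zpow_zero, one_mul]
  · simp [unitTensor, hijk]

theorem tendsto_actT_oneParam_of_mem_span {n : ℕ} {w : Fin n → Fin n → Fin n → ℂ}
    (hw : w ∈ Submodule.span ℂ {T | ∃ i j k : Fin n, min j k < i ∧ T = basisTensor i j k}) :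
    Tendsto (fun t : ℂ => actT (Matrix.diagonal fun i => t ^ lamExp n i)
      (Matrix.diagonal fun j => t ^ muExp n j) (Matrix.diagonal fun k => t ^ muExp n k) w)
      (𝓝[≠] 0) (𝓝 0) := by
  have hsupp (i j k : Fin n) (hw0 : w i j k ≠ 0) : 0 < lamExp n i + muExp n j + muExp n k :=
    lamExp_add_muExp_add_muExp_pos <| by_contra fun h =>
      hw0 (apply_eq_zero_of_mem_span_basisTensor hw h)
  refine ((tendsto_zpow_mul_tensor_nhds_zero hsupp).mono_left nhdsWithin_le_nhds).congr' ?_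
  filter_upwards [self_mem_nhdsWithin] with t ht using (actT_diagonal_zpow ht _ _ _ w).symm

theorem isUnit_diagonal_zpow {ι 𝕜 : Type*} [Fintype ι] [DecidableEq ι] [Field 𝕜] {t : 𝕜}
    (ht : t ≠ 0) (e : ι → ℤ) : IsUnit (Matrix.diagonal fun i => t ^ e i) :=
  Matrix.isUnit_diagonal.2 <| Pi.isUnit_iff.2 fun _ => (zpow_ne_zero _ ht).isUnit

/-- The one-parameter group `c(t) = (diag(t^{λᵢ}), diag(t^{μⱼ}), diag(t^{ν_k}))`:
for `t ≠ 0` it fixes the unit tensor, it drives every `w ∈ W` to `0` as `t → 0`,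
and hence `W` is contained in the nullcone of the stabilizer of the unit tensor. -/
theorem oneParam_drives_W_to_zero (n : ℕ) :
    (∀ t : ℂ, t ≠ 0 →
      actT (Matrix.diagonal fun i => t ^ lamExp n i)
        (Matrix.diagonal fun j => t ^ muExp n j)
        (Matrix.diagonal fun k => t ^ muExp n k) (unitTensor n) = unitTensor n) ∧
    (∀ w ∈ Submodule.span ℂ
        {T : Fin n → Fin n → Fin n → ℂ | ∃ i j k : Fin n, min j k < i ∧ T = basisTensor i j k},
      Filter.Tendsto
        (fun t : ℂ =>
          actT (Matrix.diagonal fun i => t ^ lamExp n i)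
            (Matrix.diagonal fun j => t ^ muExp n j)
            (Matrix.diagonal fun k => t ^ muExp n k) w)
        (nhdsWithin 0 {0}ᶜ) (nhds 0)) ∧
    (∀ w ∈ Submodule.span ℂ
        {T : Fin n → Fin n → Fin n → ℂ | ∃ i j k : Fin n, min j k < i ∧ T = basisTensor i j k},
      (0 : Fin n → Fin n → Fin n → ℂ) ∈
        closure {v | ∃ f g h : Matrix (Fin n) (Fin n) ℂ, IsUnit f ∧ IsUnit g ∧ IsUnit h ∧
          actT f g h (unitTensor n) = unitTensor n ∧ v = actT f g h w}) := by
  refine ⟨fun t ht => actT_oneParam_unitTensor ht,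
    fun w hw => tendsto_actT_oneParam_of_mem_span hw,
    fun w hw => mem_closure_of_tendsto (tendsto_actT_oneParam_of_mem_span hw) ?_⟩
  filter_upwards [self_mem_nhdsWithin] with t ht
  exact ⟨_, _, _, isUnit_diagonal_zpow ht _, isUnit_diagonal_zpow ht _, isUnit_diagonal_zpow ht _,
    actT_oneParam_unitTensor ht, rfl⟩
end
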